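/- arXiv:2205.13616 — 2 statements merged into one kernel-verified Lean document; each statement's English description precedes it below -/
import Mathlib

section
/- With the same setup (t ∈ (0,1), k > 1, positive definite Σ_S, Σ_{S^C}, β_b = (u,0), β_a = (0,v), a = uᵀΣ_S u > 0, b = vᵀΣ_{S^C} v > 0, β̂ with blocks [t/k+(1-t)]⁻¹(1-t)u and [tk+(1-t)]⁻¹ktv), if additionally a/b ≥ K1 for some K1 > 0, then (β̂ - β_b)ᵀ M_b (β̂ - β_b) / a ≤ (t/k / (t/k + 1-t))² + (tk/(tk + 1-t))² / K1. -/
open Matrix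

/-! The error β̂ - β_b is `(-(t/k)/(t/k + 1 - t)) • u` on `S` and `(tk/(tk + 1 - t)) • v` on `Sᶜ`,
so the block-diagonal form `M_b` splits its clean error into these squares times `a` and `b`;
dividing by `a` and using `b / a ≤ 1 / K1` gives the bound. -/

section QuadraticForm

variable {R m n : Type*} [Fintype m] [Fintype n]

theorem sumElim_dotProduct_fromBlocks_mulVec_sumElim [CommSemiring R]
    (A : Matrix m m R) (D : Matrix n n R) (x : m → R) (y : n → R) :
    Sum.elim x y ⬝ᵥ (fromBlocks A 0 0 D *ᵥ Sum.elim x y) = x ⬝ᵥ (A *ᵥ x) + y ⬝ᵥ (D *ᵥ y) := by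
  simp only [fromBlocks_mulVec, zero_mulVec, add_zero, zero_add, sumElim_dotProduct_sumElim,
    Sum.elim_comp_inl, Sum.elim_comp_inr]

theorem smul_dotProduct_mulVec_smul [CommSemiring R] (A : Matrix m m R) (c : R) (x : m → R) :
    (c • x) ⬝ᵥ (A *ᵥ (c • x)) = c ^ 2 * (x ⬝ᵥ (A *ᵥ x)) := by
  rw [mulVec_smul, smul_dotProduct, dotProduct_smul, smul_eq_mul, smul_eq_mul]
  ring

end QuadraticForm

theorem inv_add_mul_sub_one {K : Type*} [Field K] {s r : K} (h : s + r ≠ 0) :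
    (s + r)⁻¹ * r - 1 = -(s / (s + r)) := by
  field_simp
  ring

theorem div_le_add_div_of_le_div {x y a b K : ℝ} (hK : 0 < K) (hab : K ≤ a / b) (hy : 0 ≤ y) :
    (x * a + y * b) / a ≤ x + y / K := by
  have ha : a ≠ 0 := by
    rintro rfl
    rw [zero_div] at hab
    exact hab.not_gt hK
  have hba : b / a ≤ K⁻¹ := by
    rw [← inv_div]
    exact inv_anti₀ hK hab
  calc (x * a + y * b) / a = x + y * (b / a) := by field_simp
    _ ≤ x + y * K⁻¹ := by gcongr
    _ = x + y / K := by rw [div_eq_mul_inv]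

theorem stmt_3_general (p₁ p₂ : ℕ) (t k K1 : ℝ) (ht : t ∈ Set.Ioo (0:ℝ) 1) (hk : 1 < k)
    (hK1 : 0 < K1)
    (SigS : Matrix (Fin p₁) (Fin p₁) ℝ) (SigSC : Matrix (Fin p₂) (Fin p₂) ℝ)
    (u : Fin p₁ → ℝ) (v : Fin p₂ → ℝ) (a b : ℝ)
    (ha : a = u ⬝ᵥ (SigS *ᵥ u)) (hb : b = v ⬝ᵥ (SigSC *ᵥ v))
    (hbenign : a / b ≥ K1)
    (βb : Fin p₁ ⊕ Fin p₂ → ℝ) (hβb : βb = Sum.elim u (0 : Fin p₂ → ℝ))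
    (βhat : Fin p₁ ⊕ Fin p₂ → ℝ)
    (hβhat : βhat = Sum.elim (((t / k + (1 - t))⁻¹ * (1 - t)) • u)
      (((t * k + (1 - t))⁻¹ * (k * t)) • v))
    (Mb : Matrix (Fin p₁ ⊕ Fin p₂) (Fin p₁ ⊕ Fin p₂) ℝ)
    (hMb : Mb = Matrix.fromBlocks SigS 0 0 SigSC) :
    (βhat - βb) ⬝ᵥ (Mb *ᵥ (βhat - βb)) / a ≤
      (t / k / (t / k + (1 - t)))^2 + (t * k / (t * k + (1 - t)))^2 / K1 := by
  obtain ⟨ht0, ht1⟩ := ht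
  have hden : t / k + (1 - t) ≠ 0 := by
    have : 0 < t / k := div_pos ht0 (by linarith)
    linarith
  have hdiff : βhat - βb = Sum.elim ((-(t / k / (t / k + (1 - t)))) • u)
      ((t * k / (t * k + (1 - t))) • v) := by
    rw [hβhat, hβb, ← Sum.elim_sub_sub, sub_zero]
    congr 1
    · rw [← inv_add_mul_sub_one hden, sub_smul, one_smul]
    · rw [mul_comm k t, div_eq_inv_mul]
  rw [hdiff, hMb, sumElim_dotProduct_fromBlocks_mulVec_sumElim, smul_dotProduct_mulVec_smul,
    smul_dotProduct_mulVec_smul, neg_sq, ← ha, ← hb]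
  exact div_le_add_div_of_le_div hK1 hbenign (sq_nonneg _)

theorem stmt_3 (p₁ p₂ : ℕ) (t k K1 : ℝ) (ht : t ∈ Set.Ioo (0:ℝ) 1) (hk : 1 < k)
    (hK1 : 0 < K1)
    (SigS : Matrix (Fin p₁) (Fin p₁) ℝ) (SigSC : Matrix (Fin p₂) (Fin p₂) ℝ)
    (hS : SigS.PosDef) (hSC : SigSC.PosDef)
    (u : Fin p₁ → ℝ) (v : Fin p₂ → ℝ) (a b : ℝ)
    (ha : a = u ⬝ᵥ (SigS *ᵥ u)) (hb : b = v ⬝ᵥ (SigSC *ᵥ v))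
    (ha0 : 0 < a) (hb0 : 0 < b) (hbenign : a / b ≥ K1)
    (βb : Fin p₁ ⊕ Fin p₂ → ℝ) (hβb : βb = Sum.elim u (0 : Fin p₂ → ℝ))
    (βhat : Fin p₁ ⊕ Fin p₂ → ℝ)
    (hβhat : βhat = Sum.elim (((t / k + (1 - t))⁻¹ * (1 - t)) • u)
      (((t * k + (1 - t))⁻¹ * (k * t)) • v))
    (Mb : Matrix (Fin p₁ ⊕ Fin p₂) (Fin p₁ ⊕ Fin p₂) ℝ)
    (hMb : Mb = Matrix.fromBlocks SigS 0 0 SigSC) :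
    (βhat - βb) ⬝ᵥ (Mb *ᵥ (βhat - βb)) / a ≤
      (t / k / (t / k + (1 - t)))^2 + (t * k / (t * k + (1 - t)))^2 / K1 :=
  stmt_3_general p₁ p₂ t k K1 ht hk hK1 SigS SigSC u v a b ha hb hbenign βb hβb βhat hβhat Mb hMb
end

section
/- With the same setup, if additionally the backdoor condition k²b/a ≥ K2 holds for some K2 > 0, then (β̂ - β_a)ᵀ M_a (β̂ - β_a) / (kb) ≤ ((1-t)/(tk + 1-t))² + ((1-t)/(t/k + 1-t))² / K2. -/
/-!
Since `β̂ - β_a` has blocks `c • u` and `-d • v` with `c = (1-t)/(t/k+1-t)` and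
`d = (1-t)/(tk+1-t)`, the block-diagonal form `M_a` evaluates to `k⁻¹ c² a + k d² b`.
Divided by `kb` this is `d² + c² · a/(k²b)`, and the backdoor condition bounds `a/(k²b)` by `1/K2`.
-/

open Matrix

section BlockQuadraticForm

variable {R m n : Type*} [Fintype m] [Fintype n] [CommSemiring R]

theorem sumElim_dotProduct_fromBlocks_zero_zero_mulVec_sumElim
    (A : Matrix m m R) (D : Matrix n n R) (x : m → R) (y : n → R) :
    Sum.elim x y ⬝ᵥ (fromBlocks A 0 0 D *ᵥ Sum.elim x y) = x ⬝ᵥ (A *ᵥ x) + y ⬝ᵥ (D *ᵥ y) := by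
  simp only [fromBlocks_mulVec, zero_mulVec, add_zero, zero_add, sumElim_dotProduct_sumElim,
    Sum.elim_comp_inl, Sum.elim_comp_inr]

theorem smul_dotProduct_smul_mulVec_smul (r c : R) (A : Matrix m m R) (x : m → R) :
    (c • x) ⬝ᵥ ((r • A) *ᵥ (c • x)) = r * c ^ 2 * (x ⬝ᵥ (A *ᵥ x)) := by
  simp only [smul_mulVec, mulVec_smul, dotProduct_smul, smul_dotProduct, smul_eq_mul]
  ring

end BlockQuadraticForm

theorem div_le_add_div_of_le_div_s5 {a b k K c d : ℝ} (ha : 0 < a) (hk : 0 < k) (hK : 0 < K)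
    (h : K ≤ k ^ 2 * b / a) :
    (k⁻¹ * c ^ 2 * a + k * d ^ 2 * b) / (k * b) ≤ d ^ 2 + c ^ 2 / K := by
  have hKa : K * a ≤ k ^ 2 * b := (le_div_iff₀ ha).mp h
  have hb : 0 < b := pos_of_mul_pos_right (hKa.trans_lt' (by positivity)) (by positivity)
  calc (k⁻¹ * c ^ 2 * a + k * d ^ 2 * b) / (k * b)
      = d ^ 2 + c ^ 2 * a / (k ^ 2 * b) := by field_simp; ring
    _ ≤ d ^ 2 + c ^ 2 / K := by
      rw [add_le_add_iff_left, div_le_div_iff₀ (by positivity) hK, mul_assoc]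
      exact mul_le_mul_of_nonneg_left (by linarith) (sq_nonneg c)

theorem stmt_5_general (p₁ p₂ : ℕ) (t k K2 : ℝ) (ht : t ∈ Set.Ioo (0:ℝ) 1) (hk : 1 < k)
    (hK2 : 0 < K2)
    (SigS : Matrix (Fin p₁) (Fin p₁) ℝ) (SigSC : Matrix (Fin p₂) (Fin p₂) ℝ)
    (u : Fin p₁ → ℝ) (v : Fin p₂ → ℝ) (a b : ℝ)
    (ha : a = u ⬝ᵥ (SigS *ᵥ u)) (hb : b = v ⬝ᵥ (SigSC *ᵥ v))
    (ha0 : 0 < a) (hbackdoor : k^2 * b / a ≥ K2)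
    (βa : Fin p₁ ⊕ Fin p₂ → ℝ) (hβa : βa = Sum.elim (0 : Fin p₁ → ℝ) v)
    (βhat : Fin p₁ ⊕ Fin p₂ → ℝ)
    (hβhat : βhat = Sum.elim (((t / k + (1 - t))⁻¹ * (1 - t)) • u)
      (((t * k + (1 - t))⁻¹ * (k * t)) • v))
    (Ma : Matrix (Fin p₁ ⊕ Fin p₂) (Fin p₁ ⊕ Fin p₂) ℝ)
    (hMa : Ma = Matrix.fromBlocks (k⁻¹ • SigS) 0 0 (k • SigSC)) :
    (βhat - βa) ⬝ᵥ (Ma *ᵥ (βhat - βa)) / (k * b) ≤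
      ((1 - t) / (t * k + (1 - t)))^2 + ((1 - t) / (t / k + (1 - t)))^2 / K2 := by
  obtain ⟨ht0, ht1⟩ := ht
  have hk0 : 0 < k := one_pos.trans hk
  have hden : t * k + (1 - t) ≠ 0 := by positivity
  have hdiff : βhat - βa = Sum.elim (((1 - t) / (t / k + (1 - t))) • u)
      ((-((1 - t) / (t * k + (1 - t)))) • v) := by
    have hc : (t * k + (1 - t))⁻¹ * (k * t) - 1 = -((1 - t) / (t * k + (1 - t))) := by
      field_simp
      ring
    rw [hβhat, hβa, ← Sum.elim_sub_sub, sub_zero, ← hc, sub_smul, one_smul, inv_mul_eq_div]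
  rw [hdiff, hMa, sumElim_dotProduct_fromBlocks_zero_zero_mulVec_sumElim,
    smul_dotProduct_smul_mulVec_smul, smul_dotProduct_smul_mulVec_smul, ← ha, ← hb, neg_sq]
  exact div_le_add_div_of_le_div_s5 ha0 hk0 hK2 hbackdoor

theorem stmt_5 (p₁ p₂ : ℕ) (t k K2 : ℝ) (ht : t ∈ Set.Ioo (0:ℝ) 1) (hk : 1 < k)
    (hK2 : 0 < K2)
    (SigS : Matrix (Fin p₁) (Fin p₁) ℝ) (SigSC : Matrix (Fin p₂) (Fin p₂) ℝ)
    (hS : SigS.PosDef) (hSC : SigSC.PosDef)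
    (u : Fin p₁ → ℝ) (v : Fin p₂ → ℝ) (a b : ℝ)
    (ha : a = u ⬝ᵥ (SigS *ᵥ u)) (hb : b = v ⬝ᵥ (SigSC *ᵥ v))
    (ha0 : 0 < a) (hb0 : 0 < b) (hbackdoor : k^2 * b / a ≥ K2)
    (βa : Fin p₁ ⊕ Fin p₂ → ℝ) (hβa : βa = Sum.elim (0 : Fin p₁ → ℝ) v)
    (βhat : Fin p₁ ⊕ Fin p₂ → ℝ)
    (hβhat : βhat = Sum.elim (((t / k + (1 - t))⁻¹ * (1 - t)) • u)
      (((t * k + (1 - t))⁻¹ * (k * t)) • v))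
    (Ma : Matrix (Fin p₁ ⊕ Fin p₂) (Fin p₁ ⊕ Fin p₂) ℝ)
    (hMa : Ma = Matrix.fromBlocks (k⁻¹ • SigS) 0 0 (k • SigSC)) :
    (βhat - βa) ⬝ᵥ (Ma *ᵥ (βhat - βa)) / (k * b) ≤
      ((1 - t) / (t * k + (1 - t)))^2 + ((1 - t) / (t / k + (1 - t)))^2 / K2 :=
  stmt_5_general p₁ p₂ t k K2 ht hk hK2 SigS SigSC u v a b ha hb ha0 hbackdoor βa hβa βhat hβhat Ma
    hMa
end
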